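/- For any nonempty curves P and Π in ℝ^d, there exists a nonempty curve Π'' whose sequence of points is a subsequence of the points of Π, such that dFr(P,Π'') ≤ dFr(P,Π) and there is a one-to-many paired walk along Π'' and P whose cost equals dFr(P,Π''). -/

import Mathlib

noncomputable section

abbrev Pt (d : ℕ) : Type := EuclideanSpace ℝ (Fin d)

/-- Cost contribution of a single pair of blocks: the maximum distance between a point
of `A` and a point of `B` (0 if one of them is empty). -/
def pairCost {d : ℕ} (A B : List (Pt d)) : ℝ :=
  (A.map fun p => (B.map fun q => dist p q).foldr max 0).foldr max 0

/-- `ω` is a paired walk along `P` and `Q`: the first components partition `P` into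
consecutive nonempty blocks, the second components partition `Q`, and in each pair at
least one block is a single point. -/
def IsPairedWalk {d : ℕ} (ω : List (List (Pt d) × List (Pt d))) (P Q : List (Pt d)) : Prop :=
  (ω.map Prod.fst).flatten = P ∧ (ω.map Prod.snd).flatten = Q ∧
    ∀ pr ∈ ω, pr.1 ≠ [] ∧ pr.2 ≠ [] ∧ (pr.1.length = 1 ∨ pr.2.length = 1)

/-- The cost of a paired walk: the maximum over its pairs of the maximum distance between
matched points. -/
def walkCost {d : ℕ} (ω : List (List (Pt d) × List (Pt d))) : ℝ :=
  (ω.map fun pr => pairCost pr.1 pr.2).foldr max 0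

/-- The discrete Fréchet distance: the minimum cost over all paired walks along `P` and `Q`. -/
def dFr {d : ℕ} (P Q : List (Pt d)) : ℝ :=
  sInf {c : ℝ | ∃ ω, IsPairedWalk ω P Q ∧ walkCost ω = c}

/-- A paired walk is one-to-many if each block of the first curve is a single point. -/
def OneToMany {d : ℕ} (ω : List (List (Pt d) × List (Pt d))) : Prop :=
  ∀ pr ∈ ω, pr.1.length = 1

/-! ### foldr max lemmas -/

lemma foldr_max_nonneg (l : List ℝ) : 0 ≤ l.foldr max 0 := by
  induction l with
  | nil => simp
  | cons a t ih => exact le_max_of_le_right ih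

lemma le_foldr_max {l : List ℝ} {a : ℝ} (h : a ∈ l) : a ≤ l.foldr max 0 := by
  induction l with
  | nil => simp at h
  | cons b t ih =>
    rcases List.mem_cons.mp h with h | h
    · subst h; exact le_max_left _ _
    · exact le_max_of_le_right (ih h)

lemma foldr_max_le {l : List ℝ} {x : ℝ} (h0 : 0 ≤ x) (h : ∀ a ∈ l, a ≤ x) :
    l.foldr max 0 ≤ x := by
  induction l with
  | nil => simpa
  | cons b t ih =>
    exact max_le (h b (by simp)) (ih fun a ha => h a (List.mem_cons_of_mem _ ha))

/-! ### pairCost lemmas -/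

lemma pairCost_nonneg {d : ℕ} (A B : List (Pt d)) : 0 ≤ pairCost A B :=
  foldr_max_nonneg _

lemma dist_le_pairCost {d : ℕ} {A B : List (Pt d)} {p q : Pt d}
    (hp : p ∈ A) (hq : q ∈ B) : dist p q ≤ pairCost A B := by
  refine le_trans ?_ (le_foldr_max (List.mem_map_of_mem hp))
  exact le_foldr_max (List.mem_map_of_mem hq)

lemma pairCost_le {d : ℕ} {A B : List (Pt d)} {x : ℝ} (h0 : 0 ≤ x)
    (h : ∀ p ∈ A, ∀ q ∈ B, dist p q ≤ x) : pairCost A B ≤ x := by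
  refine foldr_max_le h0 ?_
  intro a ha
  rcases List.mem_map.mp ha with ⟨p, hp, rfl⟩
  refine foldr_max_le h0 ?_
  intro b hb
  rcases List.mem_map.mp hb with ⟨q, hq, rfl⟩
  exact h p hp q hq

lemma pairCost_comm {d : ℕ} (A B : List (Pt d)) : pairCost A B = pairCost B A := by
  refine le_antisymm ?_ ?_ <;>
  · refine pairCost_le (pairCost_nonneg _ _) ?_
    intro p hp q hq
    rw [dist_comm]
    exact dist_le_pairCost hq hp

/-! ### walkCost lemmas -/

lemma walkCost_nonneg {d : ℕ} (ω : List (List (Pt d) × List (Pt d))) : 0 ≤ walkCost ω :=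
  foldr_max_nonneg _

lemma walkCost_swap {d : ℕ} (ω : List (List (Pt d) × List (Pt d))) :
    walkCost (ω.map Prod.swap) = walkCost ω := by
  unfold walkCost
  rw [List.map_map]
  congr 1
  refine List.map_congr_left fun pr _ => ?_
  simp [Prod.swap, pairCost_comm]

lemma IsPairedWalk.swap {d : ℕ} {ω : List (List (Pt d) × List (Pt d))} {P Q : List (Pt d)}
    (h : IsPairedWalk ω P Q) : IsPairedWalk (ω.map Prod.swap) Q P := by
  obtain ⟨h1, h2, h3⟩ := h
  refine ⟨?_, ?_, ?_⟩
  · rw [List.map_map]; exact h2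
  · rw [List.map_map]; exact h1
  · intro pr hpr
    rcases List.mem_map.mp hpr with ⟨pr', hpr', rfl⟩
    obtain ⟨a, b, c⟩ := h3 pr' hpr'
    exact ⟨b, a, c.symm⟩

/-! ### dFr basic lemmas -/

lemma dFr_bddBelow {d : ℕ} (P Q : List (Pt d)) :
    BddBelow {c : ℝ | ∃ ω, IsPairedWalk ω P Q ∧ walkCost ω = c} := by
  refine ⟨0, fun c hc => ?_⟩
  rcases hc with ⟨ω, _, rfl⟩
  exact walkCost_nonneg ω

lemma dFr_le_walkCost {d : ℕ} {P Q : List (Pt d)} {ω : List (List (Pt d) × List (Pt d))}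
    (h : IsPairedWalk ω P Q) : dFr P Q ≤ walkCost ω :=
  csInf_le (dFr_bddBelow P Q) ⟨ω, h, rfl⟩

/-! ### existence of a walk -/

lemma exists_walk {d : ℕ} : ∀ (P Q : List (Pt d)), P ≠ [] → Q ≠ [] →
    ∃ ω, IsPairedWalk ω P Q := by
  intro P
  induction P with
  | nil => intro Q h _; exact absurd rfl h
  | cons p ps ih =>
    intro Q _ hQ
    rcases eq_or_ne ps [] with rfl | hps
    · exact ⟨[([p], Q)], by simp [IsPairedWalk, hQ]⟩
    · rcases Q with _ | ⟨q, qs⟩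
      · exact absurd rfl hQ
      rcases eq_or_ne qs [] with rfl | hqs
      · refine ⟨[(p :: ps, [q])], ?_⟩
        constructor
        · simp
        constructor
        · simp
        · intro pr hpr; simp at hpr; subst hpr; simp
      · obtain ⟨ω, h1, h2, h3⟩ := ih qs hps hqs
        refine ⟨([p], [q]) :: ω, ?_, ?_, ?_⟩
        · simpa using h1
        · simpa using h2
        · intro pr hpr
          rcases List.mem_cons.mp hpr with rfl | hpr
          · simp
          · exact h3 pr hpr

/-! ### finiteness -/

lemma finite_lists_of_length_le {α : Type*} {s : Set α} (hs : s.Finite) (n : ℕ) :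
    {l : List α | l.length ≤ n ∧ ∀ x ∈ l, x ∈ s}.Finite := by
  induction n with
  | zero =>
    refine Set.Finite.subset (Set.finite_singleton []) ?_
    rintro l ⟨h1, _⟩
    simp [List.length_eq_zero_iff.mp (Nat.le_zero.mp h1)]
  | succ n ih =>
    refine Set.Finite.subset
      (((hs.prod ih).image (fun p : α × List α => p.1 :: p.2)).insert []) ?_
    rintro (_ | ⟨a, l⟩) ⟨h1, h2⟩
    · simp
    · refine Set.mem_insert_iff.mpr (Or.inr ⟨(a, l), ⟨h2 a (by simp), ?_, ?_⟩, rfl⟩)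
      · simp only [List.length_cons] at h1; show l.length ≤ n; omega
      · intro x hx; exact h2 x (by simp [hx])

lemma length_le_length_flatten {α : Type*} : ∀ (L : List (List α)),
    (∀ x ∈ L, x ≠ []) → L.length ≤ L.flatten.length := by
  intro L
  induction L with
  | nil => simp
  | cons x t ih =>
    intro h
    have hx : x ≠ [] := h x (by simp)
    have : 1 ≤ x.length := List.length_pos_iff.mpr hx
    simp only [List.flatten_cons, List.length_append, List.length_cons]
    have := ih fun y hy => h y (List.mem_cons_of_mem _ hy)
    omega

lemma finite_sublists {α : Type*} (l : List α) : {a : List α | a.Sublist l}.Finite := by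
  classical
  refine Set.Finite.subset l.sublists.toFinset.finite_toSet ?_
  intro a ha
  simp only [List.coe_toFinset, Set.mem_setOf_eq, List.mem_sublists]
  exact ha

lemma finite_walks {d : ℕ} (P Q : List (Pt d)) :
    {ω : List (List (Pt d) × List (Pt d)) | IsPairedWalk ω P Q}.Finite := by
  refine Set.Finite.subset
    (finite_lists_of_length_le
      (s := {a : List (Pt d) | a.Sublist P} ×ˢ {b : List (Pt d) | b.Sublist Q})
      (((finite_sublists P).prod (finite_sublists Q))) P.length) ?_
  rintro ω ⟨h1, h2, h3⟩
  constructor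
  · have hne : ∀ x ∈ ω.map Prod.fst, x ≠ [] := by
      intro x hx
      rcases List.mem_map.mp hx with ⟨pr, hpr, rfl⟩
      exact (h3 pr hpr).1
    have := length_le_length_flatten (ω.map Prod.fst) hne
    rw [h1] at this
    simpa using this
  · intro pr hpr
    refine ⟨?_, ?_⟩
    · show pr.1.Sublist P
      rw [← h1]
      exact List.sublist_flatten_of_mem (List.mem_map_of_mem hpr)
    · show pr.2.Sublist Q
      rw [← h2]
      exact List.sublist_flatten_of_mem (List.mem_map_of_mem hpr)

lemma exists_optimal_walk {d : ℕ} {P Q : List (Pt d)} (hP : P ≠ []) (hQ : Q ≠ []) :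
    ∃ ω, IsPairedWalk ω P Q ∧ walkCost ω = dFr P Q := by
  have hne : {c : ℝ | ∃ ω, IsPairedWalk ω P Q ∧ walkCost ω = c}.Nonempty := by
    obtain ⟨ω, hω⟩ := exists_walk P Q hP hQ
    exact ⟨walkCost ω, ω, hω, rfl⟩
  have hfin : {c : ℝ | ∃ ω, IsPairedWalk ω P Q ∧ walkCost ω = c}.Finite := by
    refine Set.Finite.subset ((finite_walks P Q).image walkCost) ?_
    rintro c ⟨ω, hω, rfl⟩
    exact ⟨ω, hω, rfl⟩
  have := hne.csInf_mem hfin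
  rcases this with ⟨ω, hω, hc⟩
  exact ⟨ω, hω, hc⟩

/-! ### conversion to one-to-many -/

lemma flatten_sublist_flatten {α : Type*} {l₁ l₂ : List (List α)}
    (h : List.Forall₂ List.Sublist l₁ l₂) : l₁.flatten.Sublist l₂.flatten := by
  induction h with
  | nil => simp
  | cons h _ ih => simpa using h.append ih

lemma forall₂_take_one {α : Type*} (ω : List (List α × List α)) :
    List.Forall₂ List.Sublist (ω.map fun pr => pr.2.take 1) (ω.map Prod.snd) := by
  induction ω with
  | nil => simp
  | cons pr t ih => exact List.Forall₂.cons (List.take_sublist _ _) ih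

lemma convert_walk {d : ℕ} {ω : List (List (Pt d) × List (Pt d))} {P Q : List (Pt d)}
    (h : IsPairedWalk ω P Q) (hP : P ≠ []) :
    ∃ Q' ω', Q' ≠ [] ∧ Q'.Sublist Q ∧ IsPairedWalk ω' Q' P ∧ OneToMany ω' ∧
      walkCost ω' ≤ walkCost ω := by
  obtain ⟨h1, h2, h3⟩ := h
  have hωne : ω ≠ [] := by
    rintro rfl
    exact hP h1.symm
  refine ⟨((ω.map fun pr => ((pr.2.take 1 : List (Pt d)), pr.1)).map Prod.fst).flatten,
    ω.map fun pr => (pr.2.take 1, pr.1), ?_, ?_, ⟨rfl, ?_, ?_⟩, ?_, ?_⟩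
  · -- nonempty
    rw [Ne, List.flatten_eq_nil_iff]
    intro hall
    rcases ω with _ | ⟨pr, t⟩
    · exact hωne rfl
    have htake : pr.2.take 1 = [] := hall _ (by simp)
    have h2ne := (h3 pr (by simp)).2.1
    rcases List.take_eq_nil_iff.mp htake with hh | hh
    · simp at hh
    · exact h2ne hh
  · -- Sublist
    rw [← h2, List.map_map]
    exact flatten_sublist_flatten (forall₂_take_one ω)
  · -- snd flatten = P
    rw [List.map_map]
    exact h1
  · -- block conditions
    intro pr hpr
    rcases List.mem_map.mp hpr with ⟨pr0, hpr0, rfl⟩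
    obtain ⟨ha, hb, _⟩ := h3 pr0 hpr0
    have hlen : (pr0.2.take 1).length = 1 := by
      rw [List.length_take]
      have : 1 ≤ pr0.2.length := List.length_pos_iff.mpr hb
      omega
    refine ⟨?_, ha, Or.inl hlen⟩
    show pr0.2.take 1 ≠ []
    intro hc
    rw [hc] at hlen
    simp at hlen
  · -- OneToMany
    intro pr hpr
    rcases List.mem_map.mp hpr with ⟨pr0, hpr0, rfl⟩
    have hb := (h3 pr0 hpr0).2.1
    rw [List.length_take]
    have : 1 ≤ pr0.2.length := List.length_pos_iff.mpr hb
    omega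
  · -- cost
    refine foldr_max_le (walkCost_nonneg ω) ?_
    intro c hc
    rcases List.mem_map.mp hc with ⟨pr, hpr, rfl⟩
    rcases List.mem_map.mp hpr with ⟨pr0, hpr0, rfl⟩
    simp only
    refine le_trans ?_ (le_foldr_max (List.mem_map_of_mem
      (f := fun pr : List (Pt d) × List (Pt d) => pairCost pr.1 pr.2) hpr0))
    refine pairCost_le (pairCost_nonneg _ _) ?_
    intro p hp q hq
    rw [dist_comm]
    exact dist_le_pairCost hq (List.take_subset 1 pr0.2 hp)

/-- For any nonempty curves `P` and `Γ` there is a nonempty subsequence `Γ''` of `Γ` with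
`dFr P Γ'' ≤ dFr P Γ`, admitting a one-to-many paired walk along `Γ''` and `P` whose cost
equals `dFr P Γ''`. -/
theorem exists_one_to_many_subsequence {d : ℕ} (P Γ : List (Pt d))
    (hP : P ≠ []) (hΓ : Γ ≠ []) :
    ∃ Γ'' : List (Pt d), Γ'' ≠ [] ∧ Γ''.Sublist Γ ∧ dFr P Γ'' ≤ dFr P Γ ∧
      ∃ ω, IsPairedWalk ω Γ'' P ∧ OneToMany ω ∧ walkCost ω = dFr P Γ'' := by
  have hfin : {l : List (Pt d) | l ≠ [] ∧ l.Sublist Γ}.Finite :=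
    Set.Finite.subset (finite_sublists Γ) fun l hl => hl.2
  have hne : {l : List (Pt d) | l ≠ [] ∧ l.Sublist Γ}.Nonempty :=
    ⟨Γ, hΓ, List.Sublist.refl Γ⟩
  obtain ⟨Γ₀, ⟨hΓ₀ne, hΓ₀sub⟩, hmin⟩ :=
    Set.exists_min_image _ (dFr P) hfin hne
  obtain ⟨ω₀, hω₀, hcost₀⟩ := exists_optimal_walk hP hΓ₀ne
  obtain ⟨Γ₁, ω₁, hΓ₁ne, hΓ₁sub, hwalk₁, hotm, hle⟩ := convert_walk hω₀ hP
  have hΓ₁Γ : Γ₁.Sublist Γ := hΓ₁sub.trans hΓ₀sub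
  have hd1 : dFr P Γ₁ ≤ walkCost ω₁ := by
    have := dFr_le_walkCost hwalk₁.swap
    rwa [walkCost_swap] at this
  have hchain : walkCost ω₁ ≤ dFr P Γ₀ := hle.trans_eq hcost₀
  have hd0 : dFr P Γ₀ ≤ dFr P Γ₁ := hmin Γ₁ ⟨hΓ₁ne, hΓ₁Γ⟩
  have hΓmem : dFr P Γ₀ ≤ dFr P Γ := hmin Γ ⟨hΓ, List.Sublist.refl Γ⟩
  exact ⟨Γ₁, hΓ₁ne, hΓ₁Γ, by linarith, ω₁, hwalk₁, hotm, by linarith⟩
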